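/- Let c : Fin n → Fin q be a level map with assignment matrix Z and cluster sizes n_j, with q ≤ n, and let σ_b², σ_e² be real numbers. Then det(σ_b² • (Z * Zᵀ) + σ_e² • I_n) = (σ_e²)^(n - q) * ∏_{j : Fin q} (σ_e² + (n_j : ℝ) * σ_b²). -/

import Mathlib

/-!
Sylvester's determinant identity `det (t I_n + A B) = t^(n-q) det (t I_q + B A)` for `q ≤ n`
(the characteristic polynomials of `A B` and `B A` evaluated at `t`) turns the `n × n`
determinant into the `q × q` determinant of `σ_b² ZᵀZ + σ_e² I_q`, and `ZᵀZ` is the diagonal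
matrix of cluster sizes because distinct clusters are disjoint.
-/

open Matrix Polynomial

namespace Matrix

variable {m n R : Type*} [Fintype m] [Fintype n] [DecidableEq m] [DecidableEq n] [CommRing R]

theorem det_mul_add_smul_one_comm_of_le (A : Matrix m n R) (B : Matrix n m R)
    (hle : Fintype.card n ≤ Fintype.card m) (t : R) :
    (A * B + t • 1).det = t ^ (Fintype.card m - Fintype.card n) * (B * A + t • 1).det := by
  have key := congrArg (eval t) (charpoly_mul_comm_of_le (-A) B hle)
  simpa [eval_charpoly, sub_eq_neg_add, neg_mul, mul_neg, smul_one_eq_diagonal, add_comm] using key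

end Matrix

def assignmentMatrix {m n : Type*} [DecidableEq n] (R : Type*) [Zero R] [One R] (c : m → n) :
    Matrix m n R :=
  Matrix.of fun i j => if c i = j then 1 else 0

theorem transpose_assignmentMatrix_mul_self {m n R : Type*} [Fintype m] [DecidableEq n]
    [NonAssocSemiring R] (c : m → n) :
    (assignmentMatrix R c)ᵀ * assignmentMatrix R c =
      diagonal fun j => ((Finset.univ.filter fun i => c i = j).card : R) := by
  ext j k
  rcases eq_or_ne j k with rfl | hjk
  · simp +contextual [assignmentMatrix, mul_apply, Finset.sum_boole]
  · simp +contextual [assignmentMatrix, mul_apply, hjk.symm, diagonal_apply_ne _ hjk]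

/-- Determinant of the random intercepts marginal covariance:
`det (σ_b² Z Zᵀ + σ_e² I) = (σ_e²)^(n-q) * ∏_j (σ_e² + n_j σ_b²)`. -/
theorem det_randomIntercepts_marginalCov {n q : ℕ} (hqn : q ≤ n) (c : Fin n → Fin q)
    (Z : Matrix (Fin n) (Fin q) ℝ)
    (hZ : ∀ i j, Z i j = if c i = j then 1 else 0)
    (σb2 σe2 : ℝ) :
    (σb2 • (Z * Zᵀ) + σe2 • (1 : Matrix (Fin n) (Fin n) ℝ)).det =
      σe2 ^ (n - q) *
        ∏ j : Fin q, (σe2 + ((Finset.univ.filter fun i => c i = j).card : ℝ) * σb2) := by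
  obtain rfl : Z = assignmentMatrix ℝ c := Matrix.ext hZ
  have hle : Fintype.card (Fin q) ≤ Fintype.card (Fin n) := by simpa using hqn
  rw [← smul_mul, det_mul_add_smul_one_comm_of_le _ _ hle, Fintype.card_fin, Fintype.card_fin,
    Matrix.mul_smul, transpose_assignmentMatrix_mul_self, smul_one_eq_diagonal, ← diagonal_smul,
    diagonal_add, det_diagonal]
  simp only [Pi.smul_apply, smul_eq_mul, mul_comm σb2, add_comm σe2]
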